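/- For a continuously differentiable function f on ℝ² vanishing outside a compact set, and for every angle α and every shift u, one has cos(α)·ℜ(∂f/∂y)(α,u) − sin(α)·ℜ(∂f/∂x)(α,u) = 0. -/

import Mathlib

open Real MeasureTheory

noncomputable def radon (f : ℝ × ℝ → ℝ) (α u : ℝ) : ℝ :=
  ∫ w : ℝ, f (u * Real.cos α - w * Real.sin α, u * Real.sin α + w * Real.cos α)

section LineIntegral

variable {E F : Type*} [NormedAddCommGroup E] [NormedSpace ℝ E] [NormedAddCommGroup F]

theorem HasCompactSupport.comp_add_smul {β : Type*} [Zero β] {f : E → β}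
    (hf : HasCompactSupport f) (p : E) {v : E} (hv : v ≠ 0) :
    HasCompactSupport fun t : ℝ => f (p + t • v) :=
  hf.comp_isClosedEmbedding
    ((Homeomorph.addLeft p).isClosedEmbedding.comp (isClosedEmbedding_smul_left hv))

theorem Continuous.integrable_comp_add_smul {f : E → F} (hf : Continuous f)
    (hsupp : HasCompactSupport f) (p : E) {v : E} (hv : v ≠ 0) :
    Integrable fun t : ℝ => f (p + t • v) :=
  (hf.comp (by fun_prop)).integrable_of_hasCompactSupport (hsupp.comp_add_smul p hv)

/-- The integrand is the derivative of `t ↦ f (p + t • v)`, which has compact support. -/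
theorem integral_fderiv_apply_add_smul_eq_zero [NormedSpace ℝ F] {f : E → F}
    (hf : ContDiff ℝ 1 f) (hsupp : HasCompactSupport f) (p v : E) :
    ∫ t : ℝ, fderiv ℝ f (p + t • v) v = 0 := by
  rcases eq_or_ne v 0 with rfl | hv
  · simp
  have hline : ∀ t : ℝ, HasDerivAt (fun t : ℝ => p + t • v) v t := fun t => by
    simpa using ((hasDerivAt_id t).smul_const v).const_add p
  have hderiv : ∀ t : ℝ,
      HasDerivAt (fun t : ℝ => f (p + t • v)) (fderiv ℝ f (p + t • v) v) t := fun t =>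
    (hf.differentiable one_ne_zero _).hasFDerivAt.comp_hasDerivAt t (hline t)
  refine integral_eq_zero_of_hasDerivAt_of_integrable hderiv ?_
    (hf.continuous.integrable_comp_add_smul hsupp p hv)
  exact ((hf.continuous_fderiv one_ne_zero).clm_apply continuous_const).integrable_comp_add_smul
    (hsupp.fderiv_apply ℝ v) p hv

end LineIntegral

theorem radon_eq_integral_add_smul (g : ℝ × ℝ → ℝ) (α u : ℝ) :
    radon g α u = ∫ w : ℝ, g ((u * cos α, u * sin α) + w • (-sin α, cos α)) := by
  unfold radon
  congr 1 with w
  simp only [Prod.smul_mk, Prod.mk_add_mk, smul_eq_mul]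
  ring_nf

theorem ContinuousLinearMap.apply_mk_eq_add (ℓ : ℝ × ℝ →L[ℝ] ℝ) (a b : ℝ) :
    ℓ (a, b) = a * ℓ (1, 0) + b * ℓ (0, 1) := by
  have hab : ((a, b) : ℝ × ℝ) = a • ((1 : ℝ), (0 : ℝ)) + b • ((0 : ℝ), (1 : ℝ)) := by simp
  rw [hab, map_add, map_smul, map_smul, smul_eq_mul, smul_eq_mul]

/-- Lemma 3.3: `cos α · ℜ(∂f/∂y)(α,u) − sin α · ℜ(∂f/∂x)(α,u) = 0`. -/
theorem radon_tangential_deriv_zero (f : ℝ × ℝ → ℝ) (hf : ContDiff ℝ 1 f)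
    (hsupp : HasCompactSupport f) (α u : ℝ) :
    Real.cos α * radon (fun p => fderiv ℝ f p (0, 1)) α u
      - Real.sin α * radon (fun p => fderiv ℝ f p (1, 0)) α u = 0 := by
  set p : ℝ × ℝ := (u * cos α, u * sin α)
  set v : ℝ × ℝ := (-sin α, cos α)
  have hv : v ≠ 0 := by
    intro h
    have := sin_sq_add_cos_sq α
    simp_all [v]
  have hint : ∀ e : ℝ × ℝ, Integrable fun w : ℝ => fderiv ℝ f (p + w • v) e := fun e =>
    ((hf.continuous_fderiv one_ne_zero).clm_apply continuous_const).integrable_comp_add_smul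
      (hsupp.fderiv_apply ℝ e) p hv
  calc Real.cos α * radon (fun p => fderiv ℝ f p (0, 1)) α u
        - Real.sin α * radon (fun p => fderiv ℝ f p (1, 0)) α u
      = ∫ w : ℝ, fderiv ℝ f (p + w • v) v := by
        rw [radon_eq_integral_add_smul, radon_eq_integral_add_smul, ← integral_const_mul,
          ← integral_const_mul, ← integral_sub ((hint _).const_mul _) ((hint _).const_mul _)]
        congr 1 with w
        rw [ContinuousLinearMap.apply_mk_eq_add _ (-sin α)]
        ring
    _ = 0 := integral_fderiv_apply_add_smul_eq_zero hf hsupp p v
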